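/- Every prime p with p ≡ 3 (mod 8) can be written as p = x² + y² + z² with integers x ≠ 0, y ≠ 0, and z ≠ 0, and p cannot be written as a sum of two squares. -/

import Mathlib

/-!
Since `-2` is a square modulo `p` for `p ≡ 3 (mod 8)`, some multiple `m p` with `0 < m < p` has
the form `a² + 2b²`; Fermat's descent (reduce `a, b` modulo `m` to absolutely least residues and
divide Brahmagupta's product identity by `m²`) lowers `m` to `1`, so `p = x² + 2y² = x² + y² + y²`.
Reducing modulo 8, where squares are `0, 1, 4`, forces `x, y ≠ 0` and rules out `p = x² + y²`.
-/

theorem ZMod.two_mul_abs_valMinAbs_le {m : ℕ} [NeZero m] (x : ZMod m) :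
    2 * |x.valMinAbs| ≤ m := by
  have := ZMod.natAbs_valMinAbs_le x
  rw [Int.abs_eq_natAbs]
  omega

theorem Int.exists_eq_add_mul_and_two_mul_abs_le (m : ℕ) [NeZero m] (a : ℤ) :
    ∃ a' s : ℤ, a = a' + m * s ∧ 2 * |a'| ≤ m := by
  obtain ⟨s, hs⟩ : (m : ℤ) ∣ a - (a : ZMod m).valMinAbs := by
    rw [← ZMod.intCast_eq_intCast_iff_dvd_sub, ZMod.coe_valMinAbs]
  exact ⟨_, s, by linarith, ZMod.two_mul_abs_valMinAbs_le _⟩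

section Descent

variable {p : ℕ} {d : ℤ}

theorem Nat.Prime.exists_sq_add_mul_sq_eq_smaller_mul (hp : p.Prime) (hd0 : 0 < d) (hd2 : d ≤ 2)
    {m : ℕ} (hm : 1 < m) (hmp : m < p) {a b : ℤ} (hab : a ^ 2 + d * b ^ 2 = m * p) :
    ∃ r : ℕ, 0 < r ∧ r < m ∧ ∃ u v : ℤ, u ^ 2 + d * v ^ 2 = r * p := by
  have : NeZero m := ⟨by omega⟩
  have hm0 : (0 : ℤ) < m := by exact_mod_cast (by omega : 0 < m)
  obtain ⟨a', s, rfl, ha'⟩ := Int.exists_eq_add_mul_and_two_mul_abs_le m a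
  obtain ⟨b', t, rfl, hb'⟩ := Int.exists_eq_add_mul_and_two_mul_abs_le m b
  obtain ⟨r, hr⟩ : (m : ℤ) ∣ a' ^ 2 + d * b' ^ 2 :=
    ⟨p - (2 * a' * s + m * s ^ 2 + d * (2 * b' * t + m * t ^ 2)), by linear_combination hab⟩
  have hr0 : 0 ≤ r := by nlinarith [sq_nonneg a', sq_nonneg b']
  -- `4 (a'² + d b'²) ≤ (1 + d) m² < 4 m²`
  have hrm : r < m := by nlinarith [sq_abs a', sq_abs b', abs_nonneg a', abs_nonneg b']
  lift r to ℕ using hr0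
  refine ⟨r, Nat.pos_of_ne_zero ?_, by exact_mod_cast hrm, ?_⟩
  · rintro rfl
    rw [Nat.cast_zero, mul_zero] at hr
    obtain rfl : a' = 0 := by nlinarith [sq_nonneg a', sq_nonneg b']
    obtain rfl : b' = 0 := by nlinarith [sq_nonneg b']
    have hdvd : (m : ℤ) ∣ p := ⟨s ^ 2 + d * t ^ 2, by nlinarith⟩
    have := (Nat.prime_def.mp hp).2 m (by exact_mod_cast hdvd)
    omega
  · have hu : (a' + m * s) * a' + d * (b' + m * t) * b' = m * (r + s * a' + d * t * b') := by
      linear_combination hr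
    have hv : (a' + m * s) * b' - a' * (b' + m * t) = m * (s * b' - t * a') := by ring
    refine ⟨r + s * a' + d * t * b', s * b' - t * a', mul_left_cancel₀ (pow_ne_zero 2 hm0.ne') ?_⟩
    calc (m : ℤ) ^ 2 * ((r + s * a' + d * t * b') ^ 2 + d * (s * b' - t * a') ^ 2)
        = (m * (r + s * a' + d * t * b')) ^ 2 + d * (m * (s * b' - t * a')) ^ 2 := by ring
      _ = ((a' + m * s) * a' + d * (b' + m * t) * b') ^ 2
          + d * ((a' + m * s) * b' - a' * (b' + m * t)) ^ 2 := by rw [hu, hv]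
      _ = ((a' + m * s) ^ 2 + d * (b' + m * t) ^ 2) * (a' ^ 2 + d * b' ^ 2) := by ring
      _ = m ^ 2 * (r * p) := by rw [hab, hr]; ring

theorem Nat.Prime.exists_sq_add_mul_sq_eq_of_mul (hp : p.Prime) (hd0 : 0 < d) (hd2 : d ≤ 2)
    (m : ℕ) (hm : 0 < m) (hmp : m < p) (h : ∃ a b : ℤ, a ^ 2 + d * b ^ 2 = m * p) :
    ∃ a b : ℤ, a ^ 2 + d * b ^ 2 = p := by
  induction m using Nat.strong_induction_on with
  | _ m ih =>
    obtain ⟨a, b, hab⟩ := h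
    obtain rfl | hm1 := (Nat.succ_le_of_lt hm).eq_or_lt
    · exact ⟨a, b, by simpa using hab⟩
    obtain ⟨r, hr0, hrm, huv⟩ := hp.exists_sq_add_mul_sq_eq_smaller_mul hd0 hd2 hm1 hmp hab
    exact ih r hrm hr0 (hrm.trans hmp) huv

theorem Nat.Prime.exists_sq_add_eq_mul (hp : p.Prime) (hd0 : 0 < d) (hd2 : d ≤ 2)
    (hsq : IsSquare (-d : ZMod p)) : ∃ (m : ℕ) (a : ℤ), 0 < m ∧ m < p ∧ a ^ 2 + d = m * p := by
  have : NeZero p := ⟨hp.ne_zero⟩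
  obtain ⟨c, hc⟩ := hsq
  obtain ⟨m, hm⟩ : (p : ℤ) ∣ c.valMinAbs ^ 2 + d := by
    rw [← ZMod.intCast_zmod_eq_zero_iff_dvd]
    push_cast
    rw [sq, ← hc, neg_add_cancel]
  have ha := ZMod.two_mul_abs_valMinAbs_le c
  have hp2 : (2 : ℤ) ≤ p := by exact_mod_cast hp.two_le
  have hm0 : 0 < m := by nlinarith [sq_nonneg c.valMinAbs]
  have hmp : m < p := by nlinarith [sq_abs c.valMinAbs, abs_nonneg c.valMinAbs]
  lift m to ℕ using hm0.le
  exact ⟨m, c.valMinAbs, by exact_mod_cast hm0, by exact_mod_cast hmp, by linarith⟩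

theorem Nat.Prime.exists_sq_add_mul_sq_eq (hp : p.Prime) (hd0 : 0 < d) (hd2 : d ≤ 2)
    (hsq : IsSquare (-d : ZMod p)) : ∃ a b : ℤ, a ^ 2 + d * b ^ 2 = p := by
  obtain ⟨m, a, hm, hmp, ha⟩ := hp.exists_sq_add_eq_mul hd0 hd2 hsq
  exact hp.exists_sq_add_mul_sq_eq_of_mul hd0 hd2 m hm hmp ⟨a, 1, by linarith⟩

end Descent

theorem ZMod.sq_add_sq_ne_three (x y : ZMod 8) : x ^ 2 + y ^ 2 ≠ 3 := by
  revert x y; decide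

theorem ZMod.ne_zero_of_sq_add_two_mul_sq_eq_three {x y : ZMod 8} (h : x ^ 2 + 2 * y ^ 2 = 3) :
    x ≠ 0 ∧ y ≠ 0 := by
  revert x y; decide

/-- Every prime `p ≡ 3 (mod 8)` is a sum of three nonzero squares, and is not a
sum of two squares. -/
theorem prime_three_mod_eight_sum_three_squares (p : ℕ) (hp : p.Prime) (h : p % 8 = 3) :
    (∃ x y z : ℤ, x ≠ 0 ∧ y ≠ 0 ∧ z ≠ 0 ∧ (p : ℤ) = x ^ 2 + y ^ 2 + z ^ 2) ∧
      ¬ ∃ x y : ℤ, (p : ℤ) = x ^ 2 + y ^ 2 := by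
  have : Fact p.Prime := ⟨hp⟩
  have hp8 : ((p : ℤ) : ZMod 8) = 3 := by
    rw [Int.cast_natCast, ← ZMod.natCast_mod, h]; rfl
  constructor
  · have hsq : IsSquare (-2 : ZMod p) := (ZMod.exists_sq_eq_neg_two_iff (by omega)).mpr (.inr h)
    obtain ⟨x, y, hxy⟩ := hp.exists_sq_add_mul_sq_eq (d := 2) two_pos le_rfl (by exact_mod_cast hsq)
    obtain ⟨hx, hy⟩ := ZMod.ne_zero_of_sq_add_two_mul_sq_eq_three (x := x) (y := y) <| by
      rw [← hp8, ← hxy]; push_cast; ring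
    have hy0 : y ≠ 0 := by rintro rfl; exact hy Int.cast_zero
    exact ⟨x, y, y, by rintro rfl; exact hx Int.cast_zero, hy0, hy0, by rw [← hxy]; ring⟩
  · rintro ⟨x, y, hxy⟩
    exact ZMod.sq_add_sq_ne_three x y (by rw [← hp8, hxy]; push_cast; ring)
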